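/- arXiv:quant-ph/0309060 — 2 statements merged into one kernel-verified Lean document; each statement's English description precedes it below -/
import Mathlib

section
/- A finite nonempty set Γ ⊂ ℂ is persistent if and only if Γ ∪ {0} is persistent. -/
open Pointwise

/-- `prodPow Γ n` is the set of all products of `n+1` elements of `Γ`
(with repetition), i.e. the "all (n+1)-element products" set `Γ^(n+1)`. -/
def prodPow {M : Type*} [Monoid M] (Γ : Set M) : ℕ → Set M
  | 0 => Γ
  | n + 1 => prodPow Γ n * Γ

/-- A set is persistent iff it is finite, nonempty, and the number of
distinct `n`-element products is the same for all `n ≥ 1`. -/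
def Persistent {M : Type*} [Monoid M] (Γ : Set M) : Prop :=
  Γ.Finite ∧ Γ.Nonempty ∧ ∀ m n : ℕ, (prodPow Γ m).ncard = (prodPow Γ n).ncard

lemma prodPow_finite {M : Type*} [Monoid M] {Γ : Set M} (h : Γ.Finite) (n : ℕ) :
    (prodPow Γ n).Finite := by
  induction n with
  | zero => exact h
  | succ n ih => exact ih.mul h

lemma prodPow_nonempty {M : Type*} [Monoid M] {Γ : Set M} (h : Γ.Nonempty) (n : ℕ) :
    (prodPow Γ n).Nonempty := by
  induction n with
  | zero => exact h
  | succ n ih => exact ih.mul h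

lemma prodPow_zero_notmem {Γ : Set ℂ} (h : (0:ℂ) ∉ Γ) (n : ℕ) :
    (0:ℂ) ∉ prodPow Γ n := by
  induction n with
  | zero => exact h
  | succ n ih =>
    rintro ⟨a, ha, b, hb, hab⟩
    rcases mul_eq_zero.1 hab with rfl | rfl
    · exact ih ha
    · exact h hb

lemma prodPow_union_zero {Γ : Set ℂ} (hne : Γ.Nonempty) (n : ℕ) :
    prodPow (Γ ∪ {0}) n = prodPow Γ n ∪ {0} := by
  induction n with
  | zero => rfl
  | succ n ih =>
    show prodPow (Γ ∪ {0}) n * (Γ ∪ {0}) = prodPow Γ n * Γ ∪ {0}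
    rw [ih, Set.union_mul, Set.mul_union, Set.mul_union]
    have h1 : prodPow Γ n * ({0} : Set ℂ) = {0} := by
      rw [Set.mul_singleton]
      ext x
      simp only [Set.mem_image, Set.mem_singleton_iff, mul_zero]
      constructor
      · rintro ⟨a, -, rfl⟩; rfl
      · rintro rfl; exact ⟨_, (prodPow_nonempty hne n).choose_spec, rfl⟩
    have h2 : ({0} : Set ℂ) * Γ = {0} := by
      rw [Set.singleton_mul]
      ext x
      simp only [Set.mem_image, Set.mem_singleton_iff, zero_mul]
      constructor
      · rintro ⟨a, -, rfl⟩; rfl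
      · rintro rfl; exact ⟨_, hne.choose_spec, rfl⟩
    have h3 : ({0} : Set ℂ) * ({0} : Set ℂ) = {0} := by
      simp [Set.singleton_mul_singleton]
    rw [h1, h2, h3]
    simp [Set.union_assoc]

theorem stmt9 (Γ : Set ℂ) (hfin : Γ.Finite) (hne : Γ.Nonempty) :
    Persistent Γ ↔ Persistent (Γ ∪ {0}) := by
  by_cases h0 : (0:ℂ) ∈ Γ
  · rw [Set.union_eq_self_of_subset_right (by simpa using h0)]
  · have key : ∀ n, (prodPow (Γ ∪ {0}) n).ncard = (prodPow Γ n).ncard + 1 := by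
      intro n
      rw [prodPow_union_zero hne n, Set.union_singleton,
        Set.ncard_insert_of_notMem (prodPow_zero_notmem h0 n) (prodPow_finite hfin n)]
    constructor
    · rintro ⟨-, -, hcard⟩
      exact ⟨hfin.union (Set.finite_singleton 0), hne.inl,
        fun m n => by rw [key m, key n, hcard m n]⟩
    · rintro ⟨-, -, hcard⟩
      refine ⟨hfin, hne, fun m n => ?_⟩
      have := hcard m n
      rw [key m, key n] at this
      omega
end

section
/- If Γ is a persistent subset of ℂ, then the set {|z| : z ∈ Γ} of magnitudes of its elements is also persistent (as a subset of the nonnegative reals, under the analogous definition). -/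
open Pointwise

section Aux

variable {M : Type*} [Monoid M]

lemma prodPow_finite_s15 {S : Set M} (h : S.Finite) : ∀ n, (prodPow S n).Finite
  | 0 => h
  | n + 1 => ((prodPow_finite_s15 h n).mul h)

lemma prodPow_nonempty_s15 {S : Set M} (h : S.Nonempty) : ∀ n, (prodPow S n).Nonempty
  | 0 => h
  | n + 1 => ((prodPow_nonempty_s15 h n).mul h)

lemma mul_mem_prodPow {S : Set M} {x y : M} {m : ℕ} :
    ∀ {n : ℕ}, x ∈ prodPow S m → y ∈ prodPow S n → x * y ∈ prodPow S (m + n + 1)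
  | 0, hx, hy => Set.mul_mem_mul hx hy
  | n + 1, hx, hy => by
    obtain ⟨a, ha, b, hb, rfl⟩ := hy
    have h2 := Set.mul_mem_mul (mul_mem_prodPow (n := n) hx ha) hb
    have : x * (a * b) = x * a * b := (mul_assoc _ _ _).symm
    rw [this]
    exact h2

lemma self_pow_mem_prodPow {S : Set M} {z : M} (hz : z ∈ S) :
    ∀ n : ℕ, z ^ (n + 1) ∈ prodPow S n
  | 0 => by simpa [prodPow] using hz
  | n + 1 => by
    have := Set.mul_mem_mul (self_pow_mem_prodPow hz n) hz
    rw [← pow_succ] at this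
    exact this

lemma pow_mul_pow_mem_prodPow {S : Set M} {x y : M} {n : ℕ}
    (hx : x ∈ prodPow S n) (hy : y ∈ prodPow S n) :
    ∀ k a b : ℕ, a + b = k + 1 → x ^ a * y ^ b ∈ prodPow S (k * (n + 1) + n)
  | 0, a, b, hab => by
    rcases Nat.eq_zero_or_pos a with ha | ha
    · subst ha
      have hb : b = 1 := by omega
      subst hb
      simpa using hy
    · have ha1 : a = 1 := by omega
      have hb0 : b = 0 := by omega
      subst ha1; subst hb0
      simpa using hx
  | k + 1, a, b, hab => by
    rcases Nat.eq_zero_or_pos b with hb | hb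
    · subst hb
      have ha : a = k + 2 := by omega
      subst ha
      have h1 := pow_mul_pow_mem_prodPow hx hy k (k + 1) 0 (by omega)
      have h2 := mul_mem_prodPow h1 hx
      have he : (k + 1) * (n + 1) + n = k * (n + 1) + n + n + 1 := by ring
      rw [he]
      have hmul : x ^ (k + 2) * y ^ 0 = x ^ (k + 1) * y ^ 0 * x := by
        simp [pow_succ]
      rw [hmul]
      exact h2
    · obtain ⟨b', rfl⟩ : ∃ b', b = b' + 1 := ⟨b - 1, by omega⟩
      have h1 := pow_mul_pow_mem_prodPow hx hy k a b' (by omega)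
      have h2 := mul_mem_prodPow h1 hy
      have he : (k + 1) * (n + 1) + n = k * (n + 1) + n + n + 1 := by ring
      rw [he]
      have hmul : x ^ a * y ^ (b' + 1) = x ^ a * y ^ b' * y := by
        rw [pow_succ, mul_assoc]
      rw [hmul]
      exact h2

end Aux

lemma prodPow_image_abs (S : Set ℂ) :
    ∀ n, prodPow ((fun z => (‖z‖ : ℝ)) '' S) n
        = (fun z => (‖z‖ : ℝ)) '' prodPow S n
  | 0 => rfl
  | n + 1 => by
    show prodPow ((fun z => (‖z‖ : ℝ)) '' S) n * _ = _
    rw [prodPow_image_abs S n]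
    show _ = (fun z => (‖z‖ : ℝ)) '' (prodPow S n * S)
    ext r
    constructor
    · rintro ⟨a, ⟨x, hx, rfl⟩, b, ⟨y, hy, rfl⟩, rfl⟩
      exact ⟨x * y, Set.mul_mem_mul hx hy, by simp [map_mul]⟩
    · rintro ⟨w, ⟨x, hx, y, hy, rfl⟩, rfl⟩
      exact ⟨‖x‖, ⟨x, hx, rfl⟩, ‖y‖, ⟨y, hy, rfl⟩, by simp [map_mul]⟩

lemma zero_mem_prodPow_iff {S : Set ℂ} : ∀ {n : ℕ}, (0 : ℂ) ∈ prodPow S n ↔ (0 : ℂ) ∈ S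
  | 0 => Iff.rfl
  | n + 1 => by
    constructor
    · rintro ⟨a, ha, b, hb, hab⟩
      rcases mul_eq_zero.mp hab with h | h
      · exact zero_mem_prodPow_iff.mp (h ▸ ha)
      · exact h ▸ hb
    · intro h
      have h0 : (0 : ℂ) ∈ prodPow S n := zero_mem_prodPow_iff.mpr h
      have := Set.mul_mem_mul h0 h
      rw [mul_zero] at this
      exact this

lemma exists_ne_zero_of_mem_prodPow {S : Set ℂ} {w : ℂ} {n : ℕ}
    (hw : w ∈ prodPow S n) (hw0 : w ≠ 0) : ∃ z ∈ S, z ≠ 0 := by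
  cases n with
  | zero => exact ⟨w, hw, hw0⟩
  | succ n =>
    obtain ⟨a, _, b, hb, rfl⟩ := hw
    exact ⟨b, hb, right_ne_zero_of_mul hw0⟩

/-- Key uniqueness: in a persistent set, all positive magnitudes of `n`-fold
products coincide. -/
lemma pos_mag_unique {Γ : Set ℂ} (hΓ : Persistent Γ) {n : ℕ} {r s : ℝ}
    (hr : r ∈ prodPow ((fun z => (‖z‖ : ℝ)) '' Γ) n)
    (hs : s ∈ prodPow ((fun z => (‖z‖ : ℝ)) '' Γ) n)
    (hr0 : 0 < r) (hs0 : 0 < s) : r = s := by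
  obtain ⟨hfin, hne, hcard⟩ := hΓ
  -- reduce to the case r < s and derive a contradiction
  have key : ∀ r s : ℝ, r ∈ prodPow ((fun z => (‖z‖ : ℝ)) '' Γ) n →
      s ∈ prodPow ((fun z => (‖z‖ : ℝ)) '' Γ) n → 0 < r → r < s → False := by
    intro r s hr hs hr0 hrs
    set A : Set ℝ := (fun z => (‖z‖ : ℝ)) '' Γ with hA
    set c : ℕ := Γ.ncard with hc
    set Mi : ℕ := c * (n + 1) + n with hMi
    set f : ℕ → ℝ := fun j => r ^ (c + 1 - j) * s ^ j with hf
    have hmem : ∀ j ≤ c + 1, f j ∈ prodPow A Mi := by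
      intro j hj
      exact pow_mul_pow_mem_prodPow hr hs c (c + 1 - j) j (by omega)
    have hmono : ∀ i j : ℕ, i < j → j ≤ c + 1 → f i < f j := by
      intro i j hij hj
      have h1 : r ^ (c + 1 - i) = r ^ (c + 1 - j) * r ^ (j - i) := by
        rw [← pow_add]; congr 1; omega
      have h2 : s ^ j = s ^ (j - i) * s ^ i := by
        rw [← pow_add]; congr 1; omega
      have hlt : r ^ (j - i) < s ^ (j - i) :=
        pow_lt_pow_left₀ hrs hr0.le (by omega)
      have hs0 : 0 < s := lt_trans hr0 hrs
      calc f i = (r ^ (c + 1 - j) * s ^ i) * r ^ (j - i) := by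
              rw [hf]; simp only; rw [h1]; ring
        _ < (r ^ (c + 1 - j) * s ^ i) * s ^ (j - i) := by
              apply mul_lt_mul_of_pos_left hlt
              positivity
        _ = f j := by rw [hf]; simp only; rw [h2]; ring
    have hinj : Set.InjOn f ↑(Finset.range (c + 2)) := by
      intro i hi j hj hij
      simp only [Finset.coe_range, Set.mem_Iio] at hi hj
      by_contra hne'
      rcases Nat.lt_or_ge i j with h | h
      · exact absurd hij (ne_of_lt (hmono i j h (by omega)))
      · have h' : j < i := by omega
        exact absurd hij.symm (ne_of_lt (hmono j i h' (by omega)))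
    have hAfin : A.Finite := hfin.image _
    have hsub : ↑((Finset.range (c + 2)).image f) ⊆ prodPow A Mi := by
      intro x hx
      simp only [Finset.coe_image, Set.mem_image, Finset.coe_range, Set.mem_Iio] at hx
      obtain ⟨j, hj, rfl⟩ := hx
      exact hmem j (by omega)
    have hge : c + 2 ≤ (prodPow A Mi).ncard := by
      have h1 : ((Finset.range (c + 2)).image f).card = c + 2 := by
        rw [Finset.card_image_of_injOn hinj, Finset.card_range]
      calc c + 2 = (↑((Finset.range (c + 2)).image f) : Set ℝ).ncard := by
              rw [Set.ncard_coe_finset, h1]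
        _ ≤ (prodPow A Mi).ncard :=
              Set.ncard_le_ncard hsub (prodPow_finite_s15 hAfin Mi)
    have hle : (prodPow A Mi).ncard ≤ c := by
      rw [hA, prodPow_image_abs]
      calc ((fun z => (‖z‖ : ℝ)) '' prodPow Γ Mi).ncard
          ≤ (prodPow Γ Mi).ncard := Set.ncard_image_le (prodPow_finite_s15 hfin Mi)
        _ = (prodPow Γ 0).ncard := hcard Mi 0
        _ = c := rfl
    omega
  rcases lt_trichotomy r s with h | h | h
  · exact absurd (key r s hr hs hr0 h) (by simp)
  · exact h
  · exact absurd (key s r hs hr hs0 h) (by simp)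

open Classical in
lemma prodPow_abs_ncard {Γ : Set ℂ} (hΓ : Persistent Γ) (n : ℕ) :
    (prodPow ((fun z => (‖z‖ : ℝ)) '' Γ) n).ncard
      = if (0 : ℂ) ∈ Γ ∧ ∃ z ∈ Γ, z ≠ 0 then 2 else 1 := by
  have hfin := hΓ.1
  have hne := hΓ.2.1
  set A : Set ℝ := (fun z => (‖z‖ : ℝ)) '' Γ with hA
  have himg := prodPow_image_abs Γ n
  -- elements of prodPow A n are nonnegative
  have hnonneg : ∀ x ∈ prodPow A n, 0 ≤ x := by
    intro x hx
    rw [hA, himg] at hx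
    obtain ⟨w, -, rfl⟩ := hx
    exact norm_nonneg w
  have hzero_mem : (0 : ℝ) ∈ prodPow A n ↔ (0 : ℂ) ∈ Γ := by
    rw [hA, himg]
    constructor
    · rintro ⟨w, hw, hw0⟩
      have : w = 0 := by simpa using hw0
      exact zero_mem_prodPow_iff.mp (this ▸ hw)
    · intro h
      exact ⟨0, zero_mem_prodPow_iff.mpr h, by simp⟩
  have hpos_mem : (∃ x ∈ prodPow A n, 0 < x) ↔ ∃ z ∈ Γ, z ≠ 0 := by
    constructor
    · rintro ⟨x, hx, hx0⟩
      rw [hA, himg] at hx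
      obtain ⟨w, hw, rfl⟩ := hx
      have hw0 : w ≠ 0 := by
        intro h; rw [h] at hx0; simp at hx0
      exact exists_ne_zero_of_mem_prodPow hw hw0
    · rintro ⟨z, hz, hz0⟩
      refine ⟨‖z ^ (n + 1)‖, ?_, norm_pos_iff.mpr (pow_ne_zero _ hz0)⟩
      rw [hA, himg]
      exact ⟨z ^ (n + 1), self_pow_mem_prodPow hz n, rfl⟩
  by_cases h1 : (0 : ℂ) ∈ Γ
  · by_cases h2 : ∃ z ∈ Γ, z ≠ 0
    · rw [if_pos ⟨h1, h2⟩]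
      obtain ⟨x, hx, hx0⟩ := hpos_mem.mpr h2
      have hset : prodPow A n = {0, x} := by
        ext y
        constructor
        · intro hy
          rcases (hnonneg y hy).lt_or_eq with hy0 | hy0
          · exact Or.inr (pos_mag_unique hΓ hy hx hy0 hx0)
          · exact Or.inl hy0.symm
        · rintro (rfl | rfl)
          · exact hzero_mem.mpr h1
          · exact hx
      rw [hset, Set.ncard_pair (by exact fun h => by simp [← h] at hx0)]
    · rw [if_neg (fun h => h2 h.2)]
      have hset : prodPow A n = {0} := by
        ext y
        constructor
        · intro hy
          rcases (hnonneg y hy).lt_or_eq with hy0 | hy0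
          · exact absurd (hpos_mem.mp ⟨y, hy, hy0⟩) h2
          · exact hy0.symm
        · rintro rfl
          exact hzero_mem.mpr h1
      rw [hset, Set.ncard_singleton]
  · rw [if_neg (fun h => h1 h.1)]
    obtain ⟨z, hz⟩ := hne
    have hz0 : z ≠ 0 := fun h => h1 (h ▸ hz)
    obtain ⟨x, hx, hx0⟩ := hpos_mem.mpr ⟨z, hz, hz0⟩
    have hset : prodPow A n = {x} := by
      ext y
      constructor
      · intro hy
        rcases (hnonneg y hy).lt_or_eq with hy0 | hy0
        · exact pos_mag_unique hΓ hy hx hy0 hx0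
        · exact absurd (hzero_mem.mp (hy0 ▸ hy)) h1
      · rintro rfl
        exact hx
    rw [hset, Set.ncard_singleton]

theorem stmt15 (Γ : Set ℂ) (hΓ : Persistent Γ) :
    Persistent ((fun z => (‖z‖ : ℝ)) '' Γ) := by
  refine ⟨hΓ.1.image _, hΓ.2.1.image _, fun m n => ?_⟩
  rw [prodPow_abs_ncard hΓ m, prodPow_abs_ncard hΓ n]
end
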